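/- arXiv:2404.17223 — 2 statements merged into one kernel-verified Lean document; each statement's English description precedes it below -/
import Mathlib

section
/- Let G be a finite simple graph and let B1, B2 be two minimum cycle bases of G. Then for every cycle c1 ∈ B1 \ B2 there exists a cycle c2 ∈ B2 \ B1 such that (B1 \ {c1}) ∪ {c2} is again a minimum cycle basis of G. -/
namespace MCBI

variable {V : Type*} [Fintype V] [DecidableEq V]

/-- A *cycle* of a simple graph `G`: a set of edges of `G` such that every vertex of `G`
is incident to an even number of them. -/
def IsCycle (G : SimpleGraph V) (c : Finset (Sym2 V)) : Prop :=
  (↑c : Set (Sym2 V)) ⊆ G.edgeSet ∧ ∀ v : V, Even (c.filter (fun e => v ∈ e)).card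

/-- The `⊕`-sum (GF(2)-sum, i.e. iterated symmetric difference) of a finite set of cycles:
an edge lies in the sum iff it lies in an odd number of the cycles. -/
def cycleSum (D : Finset (Finset (Sym2 V))) : Finset (Sym2 V) :=
  Finset.univ.filter fun e => Odd (D.filter (fun c => e ∈ c)).card

/-- Linear independence over `ℤ/2ℤ`: no nonempty subset sums to the empty cycle. -/
def LinIndep (B : Finset (Finset (Sym2 V))) : Prop :=
  ∀ D ⊆ B, D.Nonempty → cycleSum D ≠ ∅

/-- `B` spans every cycle of `G`. -/
def SpansCycles (G : SimpleGraph V) (B : Finset (Finset (Sym2 V))) : Prop :=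
  ∀ c : Finset (Sym2 V), IsCycle G c → ∃ D ⊆ B, cycleSum D = c

/-- A *cycle basis* of `G`: a linearly independent set of cycles spanning every cycle of `G`. -/
def IsCycleBasis (G : SimpleGraph V) (B : Finset (Finset (Sym2 V))) : Prop :=
  (∀ c ∈ B, IsCycle G c) ∧ LinIndep B ∧ SpansCycles G B

/-- `λ_B(c, d) = 1`: the cycle `c` belongs to a subset of `B` summing to `d`
(the unique such subset when `B` is a basis). -/
def lambdaEq1 (B : Finset (Finset (Sym2 V))) (c d : Finset (Sym2 V)) : Prop :=
  ∃ D ⊆ B, cycleSum D = d ∧ c ∈ D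

/-- Total weight of a set of cycles: the sum of the numbers of edges of its cycles. -/
def weight (B : Finset (Finset (Sym2 V))) : ℕ := ∑ c ∈ B, c.card

/-- A *minimum cycle basis*: a cycle basis of minimum total weight. -/
def IsMCB (G : SimpleGraph V) (B : Finset (Finset (Sym2 V))) : Prop :=
  IsCycleBasis G B ∧
    ∀ B' : Finset (Finset (Sym2 V)), IsCycleBasis G B' → weight B ≤ weight B'

/-- Membership in the `ℤ/2ℤ`-linear span of a set `S` of cycles. -/
def InSpan (S : Set (Finset (Sym2 V))) (c : Finset (Sym2 V)) : Prop :=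
  ∃ D : Finset (Finset (Sym2 V)), (↑D : Set (Finset (Sym2 V))) ⊆ S ∧ cycleSum D = c

/-- The vertices incident to the edges of a cycle. -/
def cycVerts (c : Finset (Sym2 V)) : Finset V :=
  Finset.univ.filter fun v => ∃ e ∈ c, v ∈ e

/-- A finite set of edges forms a connected subgraph: the graph consisting of these edges
together with their endpoints is connected. -/
def EdgesConnected (E : Finset (Sym2 V)) : Prop :=
  ((SimpleGraph.fromEdgeSet (↑E : Set (Sym2 V))).induce {v : V | ∃ e ∈ E, v ∈ e}).Connected

/-- An *elementary cycle*: a nonempty cycle whose edges form a connected subgraph in which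
every incident vertex has degree exactly `2`. -/
def IsElementaryCycle (G : SimpleGraph V) (c : Finset (Sym2 V)) : Prop :=
  IsCycle G c ∧ c.Nonempty ∧
    (∀ v : V, (∃ e ∈ c, v ∈ e) → (c.filter (fun e => v ∈ e)).card = 2) ∧
    EdgesConnected c

/-- The family of independent sets of the matroid `𝓜(G)`: the sets of cycles contained
in some minimum cycle basis of `G`. -/
def matroidIndep (G : SimpleGraph V) : Set (Finset (Finset (Sym2 V))) :=
  {D | ∃ B, IsMCB G B ∧ D ⊆ B}

/-- A set `B` of cycles of the intersection graph `G` is *feasible* for the instance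
`G₁, …, G_k` if for every `i` there is a minimum cycle basis of `Gᵢ` containing `B`. -/
def Feasible {k : ℕ} (Gs : Fin k → SimpleGraph V) (G : SimpleGraph V)
    (B : Finset (Finset (Sym2 V))) : Prop :=
  (∀ c ∈ B, IsCycle G c) ∧ ∀ i : Fin k, ∃ Bi, IsMCB (Gs i) Bi ∧ B ⊆ Bi


open scoped symmDiff

section ExchangeAux

lemma cycleSum_empty : cycleSum (∅ : Finset (Finset (Sym2 V))) = ∅ := by
  simp [cycleSum]

lemma cycleSum_singleton (a : Finset (Sym2 V)) :
    cycleSum ({a} : Finset (Finset (Sym2 V))) = a := by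
  ext e
  simp only [cycleSum, Finset.mem_filter, Finset.mem_univ, true_and, Finset.filter_singleton]
  split_ifs with h <;> simp [h]

lemma cycleSum_symmDiff (D1 D2 : Finset (Finset (Sym2 V))) :
    cycleSum (D1 ∆ D2) = cycleSum D1 ∆ cycleSum D2 := by
  ext e
  simp only [cycleSum, Finset.mem_symmDiff, Finset.mem_filter, Finset.mem_univ, true_and]
  have h : (D1 ∆ D2).filter (fun c => e ∈ c)
      = (D1.filter fun c => e ∈ c) ∆ (D2.filter fun c => e ∈ c) := by
    ext c; simp only [Finset.mem_symmDiff, Finset.mem_filter]; tauto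
  rw [h]
  set s := D1.filter fun c => e ∈ c with hs
  set t := D2.filter fun c => e ∈ c with ht
  have h0 : (s ∆ t).card = (s \ t).card + (t \ s).card := by
    rw [symmDiff_def, Finset.sup_eq_union]
    exact Finset.card_union_of_disjoint disjoint_sdiff_sdiff
  have h1 : (s \ t).card + (s ∩ t).card = s.card := Finset.card_sdiff_add_card_inter s t
  have h2 : (t \ s).card + (t ∩ s).card = t.card := Finset.card_sdiff_add_card_inter t s
  have h3 : (s ∩ t).card = (t ∩ s).card := by rw [Finset.inter_comm]
  simp only [Nat.odd_iff] at *
  omega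

/-- Membership in the span (with `Finset` subset) of `S`. -/
def Sp (S : Finset (Finset (Sym2 V))) (c : Finset (Sym2 V)) : Prop :=
  ∃ E ⊆ S, cycleSum E = c

lemma symmDiff_subset_union {α : Type*} [DecidableEq α] (s t : Finset α) : s ∆ t ⊆ s ∪ t := by
  intro x hx
  rw [Finset.mem_symmDiff] at hx
  rw [Finset.mem_union]
  tauto

lemma sp_mem {S : Finset (Finset (Sym2 V))} {a : Finset (Sym2 V)} (h : a ∈ S) : Sp S a :=
  ⟨{a}, Finset.singleton_subset_iff.mpr h, cycleSum_singleton a⟩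

lemma sp_cycleSum {S D : Finset (Finset (Sym2 V))} (h : ∀ d ∈ D, Sp S d) :
    Sp S (cycleSum D) := by
  classical
  induction D using Finset.induction_on with
  | empty => exact ⟨∅, Finset.empty_subset _, rfl⟩
  | @insert a D ha ih =>
    obtain ⟨E1, hE1, h1⟩ := h a (Finset.mem_insert_self a D)
    obtain ⟨E2, hE2, h2⟩ := ih fun d hd => h d (Finset.mem_insert_of_mem hd)
    have hid : insert a D = {a} ∆ D := by
      ext x
      simp only [Finset.mem_insert, Finset.mem_symmDiff, Finset.mem_singleton]
      constructor
      · rintro (rfl | hx)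
        · exact Or.inl ⟨rfl, ha⟩
        · right; exact ⟨hx, fun h' => ha (h' ▸ hx)⟩
      · tauto
    refine ⟨E1 ∆ E2, ?_, ?_⟩
    · exact (symmDiff_subset_union E1 E2).trans (Finset.union_subset hE1 hE2)
    · rw [cycleSum_symmDiff, h1, h2, hid, cycleSum_symmDiff, cycleSum_singleton]

/-- If some subset `E` of an independent set `B` sums to `x` and contains `c`, then `x` is
not in the span of `B \ {c}` (uniqueness of representations). -/
lemma not_sp_of_mem_rep {B E : Finset (Finset (Sym2 V))} (hB : LinIndep B)
    {c x : Finset (Sym2 V)} (hE : E ⊆ B) (hsum : cycleSum E = x) (hc : c ∈ E) :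
    ¬ Sp (B \ {c}) x := by
  rintro ⟨E', hE', hsum'⟩
  have hE'B : E' ⊆ B := hE'.trans (Finset.sdiff_subset)
  have hcE' : c ∉ E' := fun h => by
    have := hE' h; simp at this
  have hsub : E ∆ E' ⊆ B :=
    (symmDiff_subset_union E E').trans (Finset.union_subset hE hE'B)
  have hne : (E ∆ E').Nonempty :=
    ⟨c, Finset.mem_symmDiff.mpr (Or.inl ⟨hc, hcE'⟩)⟩
  apply hB _ hsub hne
  rw [cycleSum_symmDiff, hsum, hsum', symmDiff_self]
  rfl

lemma weight_exchange {B : Finset (Finset (Sym2 V))} {c x : Finset (Sym2 V)}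
    (hc : c ∈ B) (hx : x ∉ B \ {c}) :
    weight (B \ {c} ∪ {x}) + c.card = weight B + x.card := by
  have h1 : B \ {c} ∪ {x} = insert x (B \ {c}) := by
    ext y; simp only [Finset.mem_union, Finset.mem_insert, Finset.mem_singleton]; tauto
  have h2 : B \ {c} = B.erase c := by
    rw [Finset.sdiff_singleton_eq_erase]
  rw [h1, weight, Finset.sum_insert hx, h2]
  have h3 : ∑ y ∈ B.erase c, y.card + c.card = ∑ y ∈ B, y.card :=
    Finset.sum_erase_add B _ hc
  unfold weight
  omega

/-- The core exchange lemma for cycle bases. -/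
lemma cycleBasis_exchange {G : SimpleGraph V} {B : Finset (Finset (Sym2 V))}
    (hB : IsCycleBasis G B) {c x : Finset (Sym2 V)} (hc : c ∈ B) (hx : IsCycle G x)
    (hns : ¬ Sp (B \ {c}) x) :
    IsCycleBasis G (B \ {c} ∪ {x}) ∧ x ∉ B \ {c} := by
  obtain ⟨hcyc, hind, hspan⟩ := hB
  have hxB : x ∉ B \ {c} := fun h => hns (sp_mem h)
  -- the representation of x in B contains c
  obtain ⟨E, hEB, hEsum⟩ := hspan x hx
  have hcE : c ∈ E := by
    by_contra h
    exact hns ⟨E, fun y hy => Finset.mem_sdiff.mpr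
      ⟨hEB hy, by simp; rintro rfl; exact h hy⟩, hEsum⟩
  -- c is in the span of the new set
  have hEc : E \ {c} ⊆ B \ {c} := Finset.sdiff_subset_sdiff hEB (le_refl _)
  have hxE : x ∉ E \ {c} := fun h => hxB (hEc h)
  have hsumEc : cycleSum (E \ {c}) = x ∆ c := by
    have hid : E = (E \ {c}) ∆ {c} := by
      ext y
      simp only [Finset.mem_symmDiff, Finset.mem_sdiff, Finset.mem_singleton]
      constructor
      · intro hy
        by_cases hyc : y = c
        · right; exact ⟨hyc, fun h => h.2 hyc⟩
        · left; exact ⟨⟨hy, hyc⟩, hyc⟩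
      · rintro (⟨⟨hy, _⟩, _⟩ | ⟨rfl, _⟩) <;> [exact hy; exact hcE]
    calc cycleSum (E \ {c}) = cycleSum (E \ {c}) ∆ (c ∆ c) := by rw [symmDiff_self, symmDiff_bot]
      _ = (cycleSum (E \ {c}) ∆ c) ∆ c := by rw [symmDiff_assoc]
      _ = cycleSum ((E \ {c}) ∆ {c}) ∆ c := by rw [cycleSum_symmDiff, cycleSum_singleton]
      _ = x ∆ c := by rw [← hid, hEsum]
  have hspc : Sp (B \ {c} ∪ {x}) c := by
    refine ⟨insert x (E \ {c}), ?_, ?_⟩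
    · intro y hy
      rcases Finset.mem_insert.mp hy with rfl | hy
      · exact Finset.mem_union_right _ (Finset.mem_singleton_self _)
      · exact Finset.mem_union_left _ (hEc hy)
    · have hid2 : insert x (E \ {c}) = ({x} : Finset (Finset (Sym2 V))) ∆ (E \ {c}) := by
        ext y
        simp only [Finset.mem_insert, Finset.mem_symmDiff, Finset.mem_singleton]
        constructor
        · rintro (rfl | hy)
          · exact Or.inl ⟨rfl, hxE⟩
          · right; exact ⟨hy, fun h => hxE (h ▸ hy)⟩
        · tauto
      rw [hid2, cycleSum_symmDiff, cycleSum_singleton, hsumEc,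
        symmDiff_symmDiff_cancel_left]
  refine ⟨⟨?_, ?_, ?_⟩, hxB⟩
  · intro d hd
    rcases Finset.mem_union.mp hd with hd | hd
    · exact hcyc d (Finset.sdiff_subset hd)
    · rw [Finset.mem_singleton] at hd; exact hd ▸ hx
  · -- linear independence
    intro D' hD' hne hzero
    by_cases hxD : x ∈ D'
    · -- removing x from D' gives a representation of x over B \ {c}
      apply hns
      have hDx : D' \ {x} ⊆ B \ {c} := by
        intro y hy
        rw [Finset.mem_sdiff, Finset.mem_singleton] at hy
        rcases Finset.mem_union.mp (hD' hy.1) with h | h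
        · exact h
        · exact absurd (Finset.mem_singleton.mp h) hy.2
      refine ⟨D' \ {x}, hDx, ?_⟩
      have hid : D' = (D' \ {x}) ∆ {x} := by
        ext y
        simp only [Finset.mem_symmDiff, Finset.mem_sdiff, Finset.mem_singleton]
        constructor
        · intro hy
          by_cases hyx : y = x
          · right; exact ⟨hyx, fun h => h.2 hyx⟩
          · left; exact ⟨⟨hy, hyx⟩, hyx⟩
        · rintro (⟨⟨hy, _⟩, _⟩ | ⟨rfl, _⟩) <;> [exact hy; exact hxD]
      have := hzero
      rw [hid, cycleSum_symmDiff, cycleSum_singleton] at this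
      -- this : cycleSum (D' \ {x}) ∆ x = ∅
      have h2 : cycleSum (D' \ {x}) = x := by
        have := congrArg (fun s => s ∆ x) this
        rwa [symmDiff_symmDiff_cancel_right, Finset.bot_eq_empty.symm,
          bot_symmDiff] at this
      exact h2
    · have hDB : D' ⊆ B := by
        intro y hy
        rcases Finset.mem_union.mp (hD' hy) with h | h
        · exact Finset.sdiff_subset h
        · exact absurd (Finset.mem_singleton.mp h) (fun e => hxD (e ▸ hy))
      exact hind D' hDB hne hzero
  · -- spanning
    intro z hz
    obtain ⟨Ez, hEz, hEzsum⟩ := hspan z hz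
    have : ∀ d ∈ Ez, Sp (B \ {c} ∪ {x}) d := by
      intro d hd
      by_cases hdc : d = c
      · exact hdc ▸ hspc
      · exact sp_mem (Finset.mem_union_left _ (Finset.mem_sdiff.mpr ⟨hEz hd, by simp [hdc]⟩))
    obtain ⟨F, hF, hFsum⟩ := sp_cycleSum this
    exact ⟨F, hF, by rw [hFsum, hEzsum]⟩

end ExchangeAux

/-- Basis exchange for minimum cycle bases: if `B₁, B₂` are minimum cycle
bases of `G`, then for every `c₁ ∈ B₁ \ B₂` there is `c₂ ∈ B₂ \ B₁` such that
`(B₁ \ {c₁}) ∪ {c₂}` is again a minimum cycle basis of `G`. -/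
theorem mcb_basis_exchange (G : SimpleGraph V) (B1 B2 : Finset (Finset (Sym2 V)))
    (hB1 : IsMCB G B1) (hB2 : IsMCB G B2) :
    ∀ c1 ∈ B1 \ B2, ∃ c2 ∈ B2 \ B1, IsMCB G (B1 \ {c1} ∪ {c2}) := by
  intro c1 hc1
  rw [Finset.mem_sdiff] at hc1
  obtain ⟨hc1B1, hc1B2⟩ := hc1
  have hcyc1 : IsCycle G c1 := hB1.1.1 c1 hc1B1
  -- represent c1 over B2
  obtain ⟨D, hD, hDsum⟩ := hB2.1.2.2 c1 hcyc1
  -- find c2 ∈ D whose B1-representation contains c1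
  have hex : ∃ d ∈ D, ∃ E ⊆ B1, cycleSum E = d ∧ c1 ∈ E := by
    by_contra h
    push_neg at h
    have hall : ∀ d ∈ D, Sp (B1 \ {c1}) d := by
      intro d hd
      obtain ⟨E, hE, hEs⟩ := hB1.1.2.2 d (hB2.1.1 d (hD hd))
      have hc1E : c1 ∉ E := fun hcE => h d hd E hE hEs hcE
      exact ⟨E, fun y hy => Finset.mem_sdiff.mpr
        ⟨hE hy, by simp; rintro rfl; exact hc1E hy⟩, hEs⟩
    have hsp := sp_cycleSum hall
    rw [hDsum] at hsp
    exact not_sp_of_mem_rep hB1.1.2.1 (Finset.singleton_subset_iff.mpr hc1B1)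
      (cycleSum_singleton c1) (Finset.mem_singleton_self c1) hsp
  obtain ⟨c2, hc2D, E, hEB1, hEsum, hc1E⟩ := hex
  have hc2B2 : c2 ∈ B2 := hD hc2D
  have hc2cyc : IsCycle G c2 := hB2.1.1 c2 hc2B2
  have hns1 : ¬ Sp (B1 \ {c1}) c2 := not_sp_of_mem_rep hB1.1.2.1 hEB1 hEsum hc1E
  have hns2 : ¬ Sp (B2 \ {c2}) c1 := not_sp_of_mem_rep hB2.1.2.1 hD hDsum hc2D
  obtain ⟨hbasis1, hnot1⟩ := cycleBasis_exchange hB1.1 hc1B1 hc2cyc hns1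
  obtain ⟨hbasis2, hnot2⟩ := cycleBasis_exchange hB2.1 hc2B2 hcyc1 hns2
  have hc2ne : c2 ≠ c1 := fun h => hc1B2 (h ▸ hc2B2)
  have hc2B1 : c2 ∉ B1 := fun h =>
    hnot1 (Finset.mem_sdiff.mpr ⟨h, by simpa using hc2ne⟩)
  -- weights
  have hw1 : weight (B1 \ {c1} ∪ {c2}) + c1.card = weight B1 + c2.card :=
    weight_exchange hc1B1 hnot1
  have hw2 : weight (B2 \ {c2} ∪ {c1}) + c2.card = weight B2 + c1.card :=
    weight_exchange hc2B2 hnot2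
  have hle1 : weight B1 ≤ weight (B1 \ {c1} ∪ {c2}) := hB1.2 _ hbasis1
  have hle2 : weight B2 ≤ weight (B2 \ {c2} ∪ {c1}) := hB2.2 _ hbasis2
  have hweq : weight (B1 \ {c1} ∪ {c2}) = weight B1 := by omega
  refine ⟨c2, Finset.mem_sdiff.mpr ⟨hc2B2, hc2B1⟩, hbasis1, ?_⟩
  intro B' hB'
  rw [hweq]
  exact hB1.2 B' hB'


end MCBI
end

section
/- Let G be a finite simple graph, let B be a minimum cycle basis of G, and let c ∈ B. Then c does not lie in the linear span (over ℤ/2ℤ) of the set of cycles of G of weight strictly less than ω(c). -/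
namespace MCBI

variable {V : Type*} [Fintype V] [DecidableEq V]

def phi (c : Finset (Sym2 V)) : Sym2 V → ZMod 2 := fun e => if e ∈ c then 1 else 0

lemma natCast_zmod_two (n : ℕ) : (n : ZMod 2) = if Odd n then 1 else 0 := by
  rw [← ZMod.natCast_mod n 2]
  rcases Nat.mod_two_eq_zero_or_one n with h | h <;>
    simp [h, Nat.odd_iff]

lemma phi_injective : Function.Injective (phi (V := V)) := by
  intro a b h
  ext e
  have := congrFun h e
  simp only [phi] at this
  by_cases ha : e ∈ a <;> by_cases hb : e ∈ b <;> simp_all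

lemma phi_empty : phi (∅ : Finset (Sym2 V)) = 0 := by
  funext e; simp [phi]

lemma phi_cycleSum (D : Finset (Finset (Sym2 V))) :
    phi (cycleSum D) = ∑ d ∈ D, phi d := by
  funext e
  rw [Finset.sum_apply]
  simp only [phi, cycleSum, Finset.mem_filter, Finset.mem_univ, true_and]
  rw [Finset.sum_boole, natCast_zmod_two]

lemma add_self_fn (x : Sym2 V → ZMod 2) : x + x = 0 := by
  funext e
  have : ∀ a : ZMod 2, a + a = 0 := by decide
  exact this (x e)

lemma sum_symmDiff_phi (D1 D2 : Finset (Finset (Sym2 V))) :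
    ∑ d ∈ symmDiff D1 D2, phi d = ∑ d ∈ D1, phi d + ∑ d ∈ D2, phi d := by
  classical
  have h1 : ∑ d ∈ D1, phi d = ∑ d ∈ D1 \ D2, phi d + ∑ d ∈ D1 ∩ D2, phi d := by
    rw [← Finset.sum_union (Finset.disjoint_sdiff_inter D1 D2), Finset.sdiff_union_inter]
  have h2 : ∑ d ∈ D2, phi d = ∑ d ∈ D2 \ D1, phi d + ∑ d ∈ D1 ∩ D2, phi d := by
    rw [Finset.inter_comm D1 D2, ← Finset.sum_union (Finset.disjoint_sdiff_inter D2 D1),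
      Finset.sdiff_union_inter]
  have h3 : ∑ d ∈ symmDiff D1 D2, phi d = ∑ d ∈ D1 \ D2, phi d + ∑ d ∈ D2 \ D1, phi d := by
    rw [symmDiff_def]
    exact Finset.sum_union disjoint_sdiff_sdiff
  rw [h1, h2, h3]
  have := add_self_fn (∑ d ∈ D1 ∩ D2, phi d)
  calc ∑ d ∈ D1 \ D2, phi d + ∑ d ∈ D2 \ D1, phi d
      = (∑ d ∈ D1 \ D2, phi d + ∑ d ∈ D1 ∩ D2, phi d) +
        (∑ d ∈ D2 \ D1, phi d + ∑ d ∈ D1 ∩ D2, phi d) -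
        (∑ d ∈ D1 ∩ D2, phi d + ∑ d ∈ D1 ∩ D2, phi d) := by abel
    _ = _ := by rw [this]; abel

lemma sum_phi_zero {B : Finset (Finset (Sym2 V))} (hB : LinIndep B)
    {X : Finset (Finset (Sym2 V))} (hX : X ⊆ B) (h : ∑ b ∈ X, phi b = 0) : X = ∅ := by
  by_contra hne
  have h1 : phi (cycleSum X) = phi ∅ := by rw [phi_cycleSum, phi_empty, h]
  exact hB X hX (Finset.nonempty_iff_ne_empty.mpr hne) (phi_injective h1)

lemma unique_rep {B : Finset (Finset (Sym2 V))} (hB : LinIndep B)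
    {D1 D2 : Finset (Finset (Sym2 V))} (h1 : D1 ⊆ B) (h2 : D2 ⊆ B)
    (h : ∑ d ∈ D1, phi d = ∑ d ∈ D2, phi d) : D1 = D2 := by
  have hsub : symmDiff D1 D2 ⊆ B := by
    intro x hx
    rcases Finset.mem_symmDiff.mp hx with ⟨hx, _⟩ | ⟨hx, _⟩
    · exact h1 hx
    · exact h2 hx
  have : ∑ d ∈ symmDiff D1 D2, phi d = 0 := by
    rw [sum_symmDiff_phi, h, add_self_fn]
  have := sum_phi_zero hB hsub this
  exact symmDiff_eq_bot.mp this

lemma nsmul_phi (n : ℕ) (x : Sym2 V → ZMod 2) :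
    n • x = if Odd n then x else 0 := by
  have : n • x = ((n : ZMod 2)) • x := (Nat.cast_smul_eq_nsmul _ _ _).symm
  rw [this, natCast_zmod_two]
  split <;> simp


/-- No cycle of a minimum cycle basis lies in the `ℤ/2ℤ`-span of the
cycles of strictly smaller weight. -/
theorem mcb_cycle_not_in_smaller_span (G : SimpleGraph V) (B : Finset (Finset (Sym2 V)))
    (hB : IsMCB G B) (c : Finset (Sym2 V)) (hc : c ∈ B) :
    ¬ InSpan {d : Finset (Sym2 V) | IsCycle G d ∧ d.card < c.card} c := by
  rintro ⟨D, hDS, hDc⟩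
  obtain ⟨⟨hBcyc, hBind, hBspan⟩, hBmin⟩ := hB
  have hrep : ∀ d : Finset (Sym2 V), ∃ E, d ∈ D → E ⊆ B ∧ cycleSum E = d := by
    intro d
    by_cases hd : d ∈ D
    · obtain ⟨E, hE1, hE2⟩ := hBspan d (hDS hd).1
      exact ⟨E, fun _ => ⟨hE1, hE2⟩⟩
    · exact ⟨∅, fun h => absurd h hd⟩
  choose Ed hEd using hrep
  have hphic : ∑ d ∈ D, phi d = phi c := by
    rw [← phi_cycleSum, hDc]
  have hexp : ∀ d ∈ D, ∑ b ∈ Ed d, phi b = phi d := fun d hd => by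
    rw [← phi_cycleSum, (hEd d hd).2]
  set F := B.filter (fun b => Odd ((D.filter fun d => b ∈ Ed d).card)) with hF
  have hFs : ∑ b ∈ F, phi b = phi c := by
    rw [hF, Finset.sum_filter]
    have hcongr : ∀ b ∈ B, (if Odd ((D.filter fun d => b ∈ Ed d).card) then phi b else 0)
        = ∑ d ∈ D, if b ∈ Ed d then phi b else 0 := by
      intro b _
      rw [← Finset.sum_filter, Finset.sum_const, nsmul_phi]
    rw [Finset.sum_congr rfl hcongr, Finset.sum_comm, ← hphic]
    refine Finset.sum_congr rfl fun d hd => ?_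
    rw [← Finset.sum_filter, Finset.filter_mem_eq_inter,
      Finset.inter_eq_right.mpr (hEd d hd).1]
    exact hexp d hd
  have hFB : F ⊆ B := Finset.filter_subset _ _
  have hFc : F = {c} := unique_rep hBind hFB (Finset.singleton_subset_iff.mpr hc)
      (by rw [hFs, Finset.sum_singleton])
  have hcF : c ∈ F := hFc ▸ Finset.mem_singleton_self c
  rw [hF, Finset.mem_filter] at hcF
  obtain ⟨-, hodd⟩ := hcF
  have hpos : (D.filter fun d => c ∈ Ed d).Nonempty := by
    rw [← Finset.card_pos]
    rcases hodd with ⟨k, hk⟩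
    omega
  obtain ⟨d, hdmem⟩ := hpos
  rw [Finset.mem_filter] at hdmem
  obtain ⟨hdD, hcEd⟩ := hdmem
  have hdlt : d.card < c.card := (hDS hdD).2
  have hdcyc : IsCycle G d := (hDS hdD).1
  have hdc : d ≠ c := fun h => by subst h; exact lt_irrefl _ hdlt
  have hdB : d ∉ B := by
    intro hdB
    have hEdd : Ed d = {d} := unique_rep hBind (hEd d hdD).1
      (Finset.singleton_subset_iff.mpr hdB)
      (by rw [hexp d hdD, Finset.sum_singleton])
    rw [hEdd, Finset.mem_singleton] at hcEd
    exact hdc hcEd.symm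
  set B' := insert d (B.erase c) with hB'
  have hdnotin : d ∉ B.erase c := fun h => hdB (Finset.mem_of_mem_erase h)
  have hwt : weight B' < weight B := by
    have h1 : ∑ x ∈ B.erase c, x.card + c.card = ∑ x ∈ B, x.card :=
      Finset.sum_erase_add B (fun x => x.card) hc
    simp only [hB', weight, Finset.sum_insert hdnotin]
    omega
  have hB'cyc : ∀ x ∈ B', IsCycle G x := by
    intro x hx
    rcases Finset.mem_insert.mp hx with rfl | hx
    · exact hdcyc
    · exact hBcyc x (Finset.mem_of_mem_erase hx)
  have hB'ind : LinIndep B' := by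
    intro D' hD' hne heq
    have hsum : ∑ b ∈ D', phi b = 0 := by
      rw [← phi_cycleSum, heq, phi_empty]
    by_cases hdD' : d ∈ D'
    · have hD'' : D'.erase d ⊆ B.erase c := by
        intro x hx
        obtain ⟨hxd, hxD'⟩ := Finset.mem_erase.mp hx
        rcases Finset.mem_insert.mp (hD' hxD') with h | h
        · exact absurd h hxd
        · exact h
      have hsub : symmDiff (D'.erase d) (Ed d) ⊆ B := by
        intro x hx
        rcases Finset.mem_symmDiff.mp hx with ⟨hx, -⟩ | ⟨hx, -⟩
        · exact Finset.mem_of_mem_erase (hD'' hx)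
        · exact (hEd d hdD).1 hx
      have hzero : ∑ b ∈ symmDiff (D'.erase d) (Ed d), phi b = 0 := by
        rw [sum_symmDiff_phi, hexp d hdD]
        calc ∑ b ∈ D'.erase d, phi b + phi d = ∑ b ∈ D', phi b :=
              Finset.sum_erase_add D' phi hdD'
          _ = 0 := hsum
      have h0 := sum_phi_zero hBind hsub hzero
      have hEq : D'.erase d = Ed d := by
        have : symmDiff (D'.erase d) (Ed d) = ⊥ := h0
        exact symmDiff_eq_bot.mp this
      have hcD : c ∈ D'.erase d := hEq ▸ hcEd
      exact (Finset.notMem_erase c B) (hD'' hcD)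
    · have hsubB : D' ⊆ B := fun x hx => by
        rcases Finset.mem_insert.mp (hD' hx) with h | h
        · exact absurd (h ▸ hx) hdD'
        · exact Finset.mem_of_mem_erase h
      exact hBind D' hsubB hne heq
  have hB'span : SpansCycles G B' := by
    intro x hx
    obtain ⟨E, hEB, hEx⟩ := hBspan x hx
    by_cases hcE : c ∈ E
    · set Fx := symmDiff (E.erase c) ((Ed d).erase c) with hFx
      have hFxB : Fx ⊆ B.erase c := by
        intro y hy
        rcases Finset.mem_symmDiff.mp hy with ⟨hy, -⟩ | ⟨hy, -⟩
        · exact Finset.mem_erase.mpr ⟨(Finset.mem_erase.mp hy).1,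
            hEB (Finset.mem_of_mem_erase hy)⟩
        · exact Finset.mem_erase.mpr ⟨(Finset.mem_erase.mp hy).1,
            (hEd d hdD).1 (Finset.mem_of_mem_erase hy)⟩
      have hdFx : d ∉ Fx := fun h => hdB (Finset.mem_of_mem_erase (hFxB h))
      refine ⟨insert d Fx, ?_, ?_⟩
      · intro y hy
        rcases Finset.mem_insert.mp hy with rfl | hy
        · exact Finset.mem_insert_self _ _
        · exact Finset.mem_insert_of_mem (hFxB hy)
      · apply phi_injective
        rw [phi_cycleSum, Finset.sum_insert hdFx, hFx, sum_symmDiff_phi]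
        have e1 : ∑ b ∈ (Ed d).erase c, phi b + phi c = phi d := by
          rw [← hexp d hdD]; exact Finset.sum_erase_add _ _ hcEd
        have e2 : ∑ b ∈ E.erase c, phi b + phi c = phi x := by
          have hEphi : ∑ b ∈ E, phi b = phi x := by rw [← phi_cycleSum, hEx]
          rw [← hEphi]; exact Finset.sum_erase_add _ _ hcE
        have hA := add_self_fn (∑ b ∈ (Ed d).erase c, phi b)
        calc phi d + (∑ b ∈ E.erase c, phi b + ∑ b ∈ (Ed d).erase c, phi b)
            = (∑ b ∈ (Ed d).erase c, phi b + phi c)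
              + (∑ b ∈ E.erase c, phi b + ∑ b ∈ (Ed d).erase c, phi b) := by rw [e1]
          _ = (∑ b ∈ (Ed d).erase c, phi b + ∑ b ∈ (Ed d).erase c, phi b)
              + (∑ b ∈ E.erase c, phi b + phi c) := by abel
          _ = phi x := by rw [hA, e2, zero_add]
    · refine ⟨E, ?_, hEx⟩
      intro y hy
      exact Finset.mem_insert_of_mem (Finset.mem_erase.mpr ⟨fun h => hcE (h ▸ hy), hEB hy⟩)
  have hle := hBmin B' ⟨hB'cyc, hB'ind, hB'span⟩
  omega

end MCBI
end
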